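/- arXiv:2601.15478 — 7 statements merged into one kernel-verified Lean document; each statement's English description precedes it below -/
import Mathlib

section
/- Let U be a finite set, n ≥ 16, and define f on subsets S of {1,…,n} by f(S) = 1/√n + |S|/n if |S| ≤ n-1, and f(S) = 2/√n + (n-1)/n if |S| = n. Then f is subadditive: f(S₁ ∪ S₂) ≤ f(S₁) + f(S₂) for all nonempty S₁, S₂ ⊆ {1,…,n}. -/
/-- For `n ≥ 16`, the function `f` with `f S = 1/√n + |S|/n` for
nonempty `S` with `|S| ≤ n-1` and `f S = 2/√n + (n-1)/n` for `|S| = n` is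
subadditive on nonempty sets. -/
theorem stmt_5 (n : ℕ) (hn : 16 ≤ n) (f : Finset (Fin n) → ℝ)
    (hf1 : ∀ S : Finset (Fin n), S.Nonempty → S.card ≤ n - 1 →
      f S = 1 / Real.sqrt n + (S.card : ℝ) / n)
    (hf2 : ∀ S : Finset (Fin n), S.card = n →
      f S = 2 / Real.sqrt n + ((n : ℝ) - 1) / n) :
    ∀ S₁ S₂ : Finset (Fin n), S₁.Nonempty → S₂.Nonempty →
      f (S₁ ∪ S₂) ≤ f S₁ + f S₂ := by
  intro S₁ S₂ h₁ h₂
  have hn0 : (0:ℝ) < n := by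
    have : 0 < n := by omega
    exact_mod_cast this
  have hs : (0:ℝ) < Real.sqrt n := Real.sqrt_pos.2 hn0
  have hcard : ∀ S : Finset (Fin n), S.card ≤ n := fun S =>
    (Finset.card_le_univ S).trans_eq (by simp)
  have hfnn : ∀ S : Finset (Fin n), S.Nonempty → 0 ≤ f S := by
    intro S hS
    rcases eq_or_lt_of_le (hcard S) with h | h
    · rw [hf2 S h]
      have h1 : (0:ℝ) ≤ 2 / Real.sqrt n := by positivity
      have h2 : (0:ℝ) ≤ ((n:ℝ) - 1) / n := by
        apply div_nonneg _ hn0.le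
        have : (1:ℝ) ≤ n := by exact_mod_cast (by omega : 1 ≤ n)
        linarith
      linarith
    · rw [hf1 S hS (Nat.le_sub_one_of_lt h)]; positivity
  have hunion : (S₁ ∪ S₂).card ≤ S₁.card + S₂.card := Finset.card_union_le S₁ S₂
  rcases eq_or_lt_of_le (hcard (S₁ ∪ S₂)) with h | h
  · rw [hf2 _ h]
    rcases eq_or_lt_of_le (hcard S₁) with h1 | h1
    · rw [hf2 _ h1]
      have := hfnn S₂ h₂
      linarith
    rcases eq_or_lt_of_le (hcard S₂) with h2 | h2
    · rw [hf2 _ h2]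
      have := hfnn S₁ h₁
      linarith
    rw [hf1 _ h₁ (Nat.le_sub_one_of_lt h1), hf1 _ h₂ (Nat.le_sub_one_of_lt h2)]
    have hsum : n ≤ S₁.card + S₂.card := by omega
    have hsum' : (n:ℝ) - 1 ≤ (S₁.card:ℝ) + S₂.card := by
      have : (n:ℝ) ≤ (S₁.card:ℝ) + S₂.card := by exact_mod_cast hsum
      linarith
    have hdiv : ((n:ℝ) - 1) / n ≤ ((S₁.card:ℝ) + S₂.card) / n := by gcongr
    have h12 : (0:ℝ) ≤ 1 / Real.sqrt n := by positivity
    have h2s : 2 / Real.sqrt n = 1 / Real.sqrt n + 1 / Real.sqrt n := by ring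
    rw [add_div] at hdiv
    linarith
  · have hu1 : S₁.card ≤ n - 1 :=
      Nat.le_sub_one_of_lt (lt_of_le_of_lt (Finset.card_le_card Finset.subset_union_left) h)
    have hu2 : S₂.card ≤ n - 1 :=
      Nat.le_sub_one_of_lt (lt_of_le_of_lt (Finset.card_le_card Finset.subset_union_right) h)
    rw [hf1 _ (h₁.mono Finset.subset_union_left) (Nat.le_sub_one_of_lt h),
      hf1 _ h₁ hu1, hf1 _ h₂ hu2]
    have hc : ((S₁ ∪ S₂).card : ℝ) ≤ (S₁.card:ℝ) + S₂.card := by exact_mod_cast hunion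
    have hdiv : ((S₁ ∪ S₂).card : ℝ) / n ≤ ((S₁.card:ℝ) + S₂.card) / n := by gcongr
    have h12 : (0:ℝ) ≤ 1 / Real.sqrt n := by positivity
    rw [add_div] at hdiv
    linarith
end

section
/- Let ℓ ≥ 5 be an integer, and let G be a uniformly random subset of {1,…,ℓ⁷} of size ℓ². For any fixed subset L ⊆ {1,…,ℓ⁷} with |L| < 2ℓ⁴, the probability that |L ∩ G| > ℓ is at most e^{-ℓ}. -/
/-!
Union bound: if `|L ∩ G| ≥ k` then `G` contains one of the `C(|L|, k)` subsets `S ⊆ L` of size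
`k`, and a fixed `S` lies in a `C(m, k) / C(n, k)` fraction of the `m`-subsets of an `n`-set.
Bounding `C(|L|, k) ≤ |L|^k / k!`, `C(m, k) ≤ m^k / k!`, `C(n, k) ≥ (n + 1 - k)^k / k!` and
`k! ≥ (k / e)^k` gives the tail bound `(e |L| m / (k (n + 1 - k)))^k`, which for `|L| < 2ℓ⁴`,
`m = ℓ²`, `n = ℓ⁷`, `k = ℓ + 1` is at most `e^{-(ℓ+1)}`.
-/

open Finset Real
open scoped Nat

namespace Finset

variable {α : Type*} [DecidableEq α] {t L : Finset α} {k m : ℕ}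

lemma card_filter_powersetCard_le_choose_mul_choose (hLt : L ⊆ t) (hkm : k ≤ m) :
    #{G ∈ t.powersetCard m | k ≤ #(L ∩ G)} ≤ (#L).choose k * (#t - k).choose (m - k) := by
  calc #{G ∈ t.powersetCard m | k ≤ #(L ∩ G)}
      ≤ #((L.powersetCard k).biUnion fun S => {G ∈ t.powersetCard m | S ⊆ G}) := by
        refine card_le_card fun G hG => ?_
        obtain ⟨hG, hkG⟩ := mem_filter.1 hG
        obtain ⟨S, hSLG, hS⟩ := exists_subset_card_eq hkG
        exact mem_biUnion.2 ⟨S, mem_powersetCard.2 ⟨hSLG.trans inter_subset_left, hS⟩,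
          mem_filter.2 ⟨hG, hSLG.trans inter_subset_right⟩⟩
    _ ≤ #(L.powersetCard k) * (#t - k).choose (m - k) := by
        refine card_biUnion_le_card_mul _ _ _ fun S hS => ?_
        obtain ⟨hSL, rfl⟩ := mem_powersetCard.1 hS
        exact (card_filter_powersetCard_subset S t m (hSL.trans hLt) hkm).le
    _ = (#L).choose k * (#t - k).choose (m - k) := by rw [card_powersetCard]

lemma card_filter_powersetCard_le_choose_div_choose (hLt : L ⊆ t) (hkm : k ≤ m)
    (hmt : m ≤ #t) :
    (#{G ∈ t.powersetCard m | k ≤ #(L ∩ G)} : ℝ) ≤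
      (#L).choose k * m.choose k / (#t).choose k * #(t.powersetCard m) := by
  have hchoose : (0 : ℝ) < (#t).choose k := by exact_mod_cast Nat.choose_pos (hkm.trans hmt)
  have hcount : ((#t).choose m * m.choose k : ℝ) = (#t).choose k * (#t - k).choose (m - k) := by
    exact_mod_cast Nat.choose_mul hkm
  calc (#{G ∈ t.powersetCard m | k ≤ #(L ∩ G)} : ℝ)
      ≤ (#L).choose k * (#t - k).choose (m - k) := by
        exact_mod_cast card_filter_powersetCard_le_choose_mul_choose hLt hkm
    _ = (#L).choose k * ((#t).choose m * m.choose k) / (#t).choose k := by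
        rw [hcount]; field_simp
    _ = _ := by rw [card_powersetCard]; ring

end Finset

lemma Nat.choose_mul_choose_div_choose_le (a m : ℕ) {n k : ℕ} (hkn : k ≤ n) :
    (a.choose k * m.choose k / n.choose k : ℝ) ≤ (a * m * exp 1 / (k * (n + 1 - k))) ^ k := by
  rcases Nat.eq_zero_or_pos k with rfl | hk
  · simp
  have hnk : ((n + 1 - k : ℕ) : ℝ) = n + 1 - k := by
    rw [Nat.cast_sub (by omega)]; push_cast; ring
  have hnk_pos : (0 : ℝ) < n + 1 - k := by rw [← hnk]; exact_mod_cast (by omega : 0 < n + 1 - k)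
  have hkk : (0 : ℝ) < (k : ℝ) ^ k := pow_pos (by exact_mod_cast hk) k
  have hfact : (k : ℝ) ^ k / exp k ≤ k ! := by
    rw [div_le_iff₀ (exp_pos _), mul_comm, ← div_le_iff₀ (by positivity)]
    exact pow_div_factorial_le_exp _ (Nat.cast_nonneg k) k
  calc (a.choose k * m.choose k / n.choose k : ℝ)
      ≤ (a ^ k / k !) * (m ^ k / k !) / ((n + 1 - k) ^ k / k !) := by
        gcongr
        exacts [Nat.choose_le_pow_div k a, Nat.choose_le_pow_div k m, hnk ▸ Nat.pow_le_choose k n]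
    _ = (a * m) ^ k / ((n + 1 - k) ^ k * k !) := by field_simp; ring
    _ ≤ (a * m) ^ k / ((n + 1 - k) ^ k * (k ^ k / exp k)) := by gcongr
    _ = (a * m * exp 1 / (k * (n + 1 - k))) ^ k := by
        rw [div_pow, mul_pow, mul_pow, mul_pow, ← exp_nat_mul, mul_one]
        field_simp
        rw [mul_pow]
        ring

lemma mul_sq_mul_exp_one_div_le_exp_neg_one {ℓ a : ℝ} (hℓ : 5 ≤ ℓ)
    (ha : a ≤ 2 * ℓ ^ 4) :
    a * ℓ ^ 2 * exp 1 / ((ℓ + 1) * (ℓ ^ 7 + 1 - (ℓ + 1))) ≤ exp (-1) := by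
  have hℓ6 : 0 < ℓ ^ 6 := by positivity
  have hℓ7 : ℓ ^ 2 + ℓ ≤ ℓ ^ 7 := by
    nlinarith [pow_le_pow_right₀ (by linarith : (1 : ℝ) ≤ ℓ) (by norm_num : 2 ≤ 6)]
  have he2 : exp 1 * exp 1 < 7.4 := by nlinarith [exp_one_lt_d9, exp_pos 1]
  rw [div_le_iff₀ (by nlinarith), exp_neg, ← div_eq_inv_mul, le_div_iff₀ (exp_pos 1)]
  have hℓ2e2 : 0 ≤ ℓ ^ 2 * exp 1 * exp 1 := by positivity
  nlinarith [exp_pos 1, mul_le_mul_of_nonneg_right ha hℓ2e2]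

/-- Let `ℓ ≥ 5` and let `G` be a uniformly random subset of
`{1,…,ℓ⁷}` of size `ℓ²`. For any fixed `L` with `|L| < 2ℓ⁴`, the probability
that `|L ∩ G| > ℓ` is at most `e^{-ℓ}` (stated via counting: the number of
size-`ℓ²` subsets `G` with `|L ∩ G| > ℓ` is at most `e^{-ℓ}` times the total
number of size-`ℓ²` subsets). -/
theorem stmt_6 (ℓ : ℕ) (hℓ : 5 ≤ ℓ) (L : Finset (Fin (ℓ ^ 7)))
    (hL : L.card < 2 * ℓ ^ 4) :
    (((Finset.powersetCard (ℓ ^ 2) (Finset.univ : Finset (Fin (ℓ ^ 7)))).filter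
        (fun G => ℓ < (L ∩ G).card)).card : ℝ) ≤
      Real.exp (-(ℓ : ℝ)) *
        ((Finset.powersetCard (ℓ ^ 2) (Finset.univ : Finset (Fin (ℓ ^ 7)))).card : ℝ) := by
  have hkm : ℓ + 1 ≤ ℓ ^ 2 := by nlinarith
  have hmn : ℓ ^ 2 ≤ ℓ ^ 7 := Nat.pow_le_pow_right (by omega) (by omega)
  have hℓ7 : (ℓ : ℝ) ≤ ℓ ^ 7 := by exact_mod_cast Nat.le_self_pow (by omega) ℓ
  have hratio :
      ((#L).choose (ℓ + 1) * (ℓ ^ 2).choose (ℓ + 1) / (ℓ ^ 7).choose (ℓ + 1) : ℝ) ≤ exp (-ℓ) :=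
    calc _ ≤ (#L * (ℓ ^ 2 : ℕ) * exp 1 / ((ℓ + 1 : ℕ) * ((ℓ ^ 7 : ℕ) + 1 - (ℓ + 1 : ℕ))))
            ^ (ℓ + 1) := Nat.choose_mul_choose_div_choose_le _ _ (hkm.trans hmn)
      _ ≤ exp (-1) ^ (ℓ + 1) := by
          push_cast
          gcongr
          · exact div_nonneg (by positivity) (mul_nonneg (by positivity) (by linarith))
          exact mul_sq_mul_exp_one_div_le_exp_neg_one (by exact_mod_cast hℓ)
            (by exact_mod_cast hL.le)
      _ ≤ exp (-ℓ) := by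
          rw [← exp_nat_mul]
          gcongr
          push_cast
          linarith
  refine le_trans ?_ (mul_le_mul_of_nonneg_right hratio (Nat.cast_nonneg _))
  simpa only [card_univ, Fintype.card_fin, Nat.add_one_le_iff] using
    card_filter_powersetCard_le_choose_div_choose (subset_univ L) hkm (by simpa)
end

section
/- Let f : 2^T → ℝ≥0 be an XOS function (a pointwise maximum of finitely many nonnegative additive functions). Then for any S ⊆ U ⊆ T, Σ_{i ∈ S} (f(U) - f(U \ {i})) ≤ f(S). -/
/-! An XOS function is supported at `U` by the additive clause `ℓ` attaining the maximum there:
`ℓ ≤ f` everywhere and `ℓ U = f U`. Removing `i` from `U` then costs `f` at most `ℓ {i}`, so the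
marginals over `S ⊆ U` sum to at most `ℓ S ≤ f S`. -/

open Finset

section SupportingAdditive

variable {T α : Type*} [DecidableEq T] [AddCommGroup α] [PartialOrder α] [IsOrderedAddMonoid α]
  {f : Finset T → α} {a : T → α} {U : Finset T}

theorem marginal_le_of_supporting (hle : ∀ S, ∑ j ∈ S, a j ≤ f S) (hU : f U = ∑ j ∈ U, a j)
    {i : T} (hi : i ∈ U) : f U - f (U.erase i) ≤ a i := by
  have hsplit : ∑ j ∈ U, a j = a i + ∑ j ∈ U.erase i, a j := (add_sum_erase U a hi).symm
  rw [sub_le_iff_le_add, hU, hsplit]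
  exact add_le_add_right (hle _) _

theorem sum_marginal_le_of_supporting (hle : ∀ S, ∑ j ∈ S, a j ≤ f S)
    (hU : f U = ∑ j ∈ U, a j) {S : Finset T} (hSU : S ⊆ U) :
    ∑ i ∈ S, (f U - f (U.erase i)) ≤ f S :=
  calc ∑ i ∈ S, (f U - f (U.erase i)) ≤ ∑ i ∈ S, a i :=
        sum_le_sum fun _ hi => marginal_le_of_supporting hle hU (hSU hi)
    _ ≤ f S := hle S

end SupportingAdditive

theorem stmt_9_general {T : Type*} [DecidableEq T] {ι : Type*}
    (L : Finset ι) (hL : L.Nonempty) (w : ι → T → ℝ)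
    (f : Finset T → ℝ)
    (hf : ∀ S : Finset T, f S = L.sup' hL (fun l => ∑ i ∈ S, w l i)) :
    ∀ S U : Finset T, S ⊆ U →
      ∑ i ∈ S, (f U - f (U.erase i)) ≤ f S := by
  intro S U hSU
  obtain ⟨l, hl, hlU⟩ := exists_mem_eq_sup' hL fun l => ∑ i ∈ U, w l i
  have hle : ∀ S, ∑ j ∈ S, w l j ≤ f S := fun S =>
    (hf S).symm ▸ le_sup' (fun l => ∑ j ∈ S, w l j) hl
  exact sum_marginal_le_of_supporting hle ((hf U).trans hlU) hSU

/-- If `f` is XOS (a pointwise maximum of finitely many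
nonnegative additive functions), then for `S ⊆ U`,
`∑_{i ∈ S} (f U - f (U \ {i})) ≤ f S`. -/
theorem stmt_9 {T : Type*} [DecidableEq T] {ι : Type*}
    (L : Finset ι) (hL : L.Nonempty) (w : ι → T → ℝ)
    (hw : ∀ l i, 0 ≤ w l i)
    (f : Finset T → ℝ)
    (hf : ∀ S : Finset T, f S = L.sup' hL (fun l => ∑ i ∈ S, w l i)) :
    ∀ S U : Finset T, S ⊆ U →
      ∑ i ∈ S, (f U - f (U.erase i)) ≤ f S :=
  stmt_9_general L hL w f hf
end

section
/- Let f : 2^T → ℝ≥0 be monotone submodular with f(∅)=0, and let c : T → ℝ≥0 be additive costs. Suppose S ⊆ T, α > 0, and for every j ∈ S the marginal f(S) - f(S \ {j}) ≥ c(j)/α. Then S is subset-stable at payment 2α for the single-agent problem: for every S' ⊆ S, 2α·f(S) - Σ_{j∈S} c(j) ≥ 2α·f(S') - Σ_{j∈S'} c(j). -/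
/-!
By submodularity, the loss `f S - f S'` dominates the sum of the marginals `f S - f (S \ {j})`
over `j ∈ S \ S'`, hence `α (f S - f S') ≥ c(S) - c(S')`. Monotonicity makes `α (f S - f S')`
nonnegative, which pays for the second copy of `α`.
-/

open Finset

theorem Finset.sum_marginal_le_sub_sdiff {T : Type*} [DecidableEq T] (f : Finset T → ℝ)
    (hsubmod : ∀ A B : Finset T, f (A ∪ B) + f (A ∩ B) ≤ f A + f B)
    {S D : Finset T} (hD : D ⊆ S) :
    ∑ j ∈ D, (f S - f (S.erase j)) ≤ f S - f (S \ D) := by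
  induction D using Finset.induction_on with
  | empty => simp
  | @insert a D ha ih =>
    have haS : a ∈ S := hD (mem_insert_self a D)
    have hunion : S.erase a ∪ (S \ D) = S := by
      ext x
      by_cases hxa : x = a <;> simp_all
    have hinter : S.erase a ∩ (S \ D) = S \ insert a D := by
      ext x
      simp only [mem_inter, mem_erase, mem_sdiff, mem_insert]
      tauto
    have hstep := hsubmod (S.erase a) (S \ D)
    rw [hunion, hinter] at hstep
    rw [sum_insert ha]
    linarith [ih ((subset_insert a D).trans hD)]

theorem stmt_12_general {T : Type*} [DecidableEq T] (f : Finset T → ℝ) (c : T → ℝ)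
    (hmono : ∀ A B : Finset T, A ⊆ B → f A ≤ f B)
    (hsubmod : ∀ A B : Finset T, f (A ∪ B) + f (A ∩ B) ≤ f A + f B)
    (α : ℝ) (hα : 0 < α)
    (S : Finset T)
    (hmarg : ∀ j ∈ S, f S - f (S.erase j) ≥ c j / α) :
    ∀ S' ⊆ S,
      2 * α * f S - ∑ j ∈ S, c j ≥ 2 * α * f S' - ∑ j ∈ S', c j := by
  intro S' hS'
  have hcost : ∑ j ∈ S \ S', c j ≤ α * (f S - f S') :=
    calc ∑ j ∈ S \ S', c j
        = α * ∑ j ∈ S \ S', c j / α := by rw [← sum_div, mul_div_cancel₀ _ hα.ne']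
      _ ≤ α * ∑ j ∈ S \ S', (f S - f (S.erase j)) := by
          gcongr with j hj
          exact hmarg j (mem_sdiff.mp hj).1
      _ ≤ α * (f S - f S') := by
          gcongr
          simpa only [Finset.sdiff_sdiff_eq_self hS'] using
            sum_marginal_le_sub_sdiff f hsubmod (sdiff_subset (s := S) (t := S'))
  have hgain : 0 ≤ α * (f S - f S') := mul_nonneg hα.le (sub_nonneg.mpr (hmono S' S hS'))
  linarith [sum_sdiff_eq_sub hS' (f := c)]

/-- If `f` is monotone submodular with `f ∅ = 0`, costs `c ≥ 0`,
`α > 0`, and every `j ∈ S` satisfies `f S - f (S \ {j}) ≥ c j / α`, then `S`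
is subset-stable at payment `2α`: for every `S' ⊆ S`,
`2α f S - c(S) ≥ 2α f S' - c(S')`. -/
theorem stmt_12 {T : Type*} [DecidableEq T] (f : Finset T → ℝ) (c : T → ℝ)
    (hmono : ∀ A B : Finset T, A ⊆ B → f A ≤ f B)
    (hsubmod : ∀ A B : Finset T, f (A ∪ B) + f (A ∩ B) ≤ f A + f B)
    (hempty : f ∅ = 0)
    (hc : ∀ j, 0 ≤ c j)
    (α : ℝ) (hα : 0 < α)
    (S : Finset T)
    (hmarg : ∀ j ∈ S, f S - f (S.erase j) ≥ c j / α) :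
    ∀ S' ⊆ S,
      2 * α * f S - ∑ j ∈ S, c j ≥ 2 * α * f S' - ∑ j ∈ S', c j :=
  stmt_12_general f c hmono hsubmod α hα S hmarg
end

section
/- Let f be monotone submodular with f(∅)=0 on the disjoint union T = T₁ ⊔ … ⊔ T_n. Suppose S = ⊔ᵢ Sᵢ is subset-stable with respect to contract α (i.e., for each i and S'_i ⊆ S_i, αᵢ·f(Sᵢ ⊔ S₋ᵢ) - c(Sᵢ) ≥ αᵢ·f(S'_i ⊔ S₋ᵢ) - c(S'_i)), and S_i = ∅ whenever αᵢ = 0. Then every Nash equilibrium S† of the contract 2α satisfies f(S†) ≥ (1/2)·f(S). -/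
/-!
In the equilibrium `Sd` of `2α`, agent `i` may deviate to `Sd i ∪ S i`; this bounds
`2 αᵢ (f(Sd ∪ Sᵢ) - f(Sd))` by `c(Sᵢ)`. Subset-stability of `S` against dropping `Sᵢ` bounds
`c(Sᵢ)` by `αᵢ (f(S) - f(S \ Sᵢ))`, so `2 (f(Sd ∪ Sᵢ) - f(Sd)) ≤ f(S) - f(S \ Sᵢ)` (trivially
when `αᵢ = 0`, as then `Sᵢ = ∅`). Summing over `i`, submodularity bounds the left side below by
`2 (f(Sd ∪ S) - f(Sd))` and, the `Sᵢ` being disjoint, the right side above by `f(S)`;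
monotonicity `f(S) ≤ f(Sd ∪ S)` then gives `f(S) ≤ 2 f(Sd)`.
-/

open Finset Function

section SetFunction

variable {T ι : Type*} [DecidableEq T] {f : Finset T → ℝ}

theorem sub_le_sum_sub_of_submodular (hmono : ∀ A B : Finset T, A ⊆ B → f A ≤ f B)
    (hsubmod : ∀ A B : Finset T, f (A ∪ B) + f (A ∩ B) ≤ f A + f B)
    (s : Finset ι) (A : ι → Finset T) (B : Finset T) :
    f (B ∪ s.biUnion A) - f B ≤ ∑ i ∈ s, (f (B ∪ A i) - f B) := by
  classical
  induction s using Finset.induction_on with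
  | empty => simp
  | @insert k s hk ih =>
    rw [biUnion_insert, sum_insert hk]
    have hunion : B ∪ (A k ∪ s.biUnion A) = (B ∪ A k) ∪ (B ∪ s.biUnion A) := by
      rw [union_union_distrib_left]
    have hinter : f B ≤ f ((B ∪ A k) ∩ (B ∪ s.biUnion A)) :=
      hmono _ _ (subset_inter subset_union_left subset_union_left)
    rw [hunion]
    linarith [hsubmod (B ∪ A k) (B ∪ s.biUnion A)]

theorem sum_sub_le_sub_of_submodular
    (hsubmod : ∀ A B : Finset T, f (A ∪ B) + f (A ∩ B) ≤ f A + f B)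
    (s : Finset ι) {A : ι → Finset T} (hA : (s : Set ι).PairwiseDisjoint A) (U : Finset T) :
    ∑ i ∈ s, (f U - f (U \ A i)) ≤ f U - f (U \ s.biUnion A) := by
  classical
  induction s using Finset.induction_on with
  | empty => simp
  | @insert k s hk ih =>
    rw [coe_insert, Set.pairwiseDisjoint_insert_of_notMem (mem_coe.not.2 hk)] at hA
    rw [biUnion_insert, sum_insert hk]
    have hdisj : Disjoint (A k) (s.biUnion A) :=
      (disjoint_biUnion_right _ _ _).2 fun j hj => hA.2 j hj
    have hunion : (U \ A k) ∪ (U \ s.biUnion A) = U := by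
      rw [← sdiff_inter_distrib_right, disjoint_iff_inter_eq_empty.1 hdisj, sdiff_empty]
    have hinter : (U \ A k) ∩ (U \ s.biUnion A) = U \ (A k ∪ s.biUnion A) :=
      (sdiff_union_distrib _ _ _).symm
    linarith [ih hA.1, hunion ▸ hinter ▸ hsubmod (U \ A k) (U \ s.biUnion A)]

theorem le_two_mul_of_two_mul_sub_le_sub (hmono : ∀ A B : Finset T, A ⊆ B → f A ≤ f B)
    (hsubmod : ∀ A B : Finset T, f (A ∪ B) + f (A ∩ B) ≤ f A + f B) (hempty : f ∅ = 0)
    (s : Finset ι) {A : ι → Finset T} (hA : (s : Set ι).PairwiseDisjoint A) (D : Finset T)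
    (h : ∀ i ∈ s, 2 * (f (D ∪ A i) - f D) ≤ f (s.biUnion A) - f (s.biUnion A \ A i)) :
    f (s.biUnion A) ≤ 2 * f D := by
  have hgain := sub_le_sum_sub_of_submodular hmono hsubmod s A D
  have hloss := sum_sub_le_sub_of_submodular hsubmod s hA (s.biUnion A)
  rw [Finset.sdiff_self, hempty] at hloss
  have hsum := sum_le_sum h
  rw [← mul_sum] at hsum
  linarith [hmono _ _ (subset_union_right : s.biUnion A ⊆ D ∪ s.biUnion A)]

end SetFunction

theorem pairwise_disjoint_of_owner {ι T : Type*} {own : T → ι} {S : ι → Finset T}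
    (hS : ∀ i, ∀ j ∈ S i, own j = i) : Pairwise (Disjoint on S) :=
  fun i k hik => disjoint_left.2 fun x hi hk => hik ((hS i x hi).symm.trans (hS k x hk))

section Update

variable {ι T : Type*} [Fintype ι] [DecidableEq ι] [DecidableEq T] (F : ι → Finset T) (i : ι)

theorem biUnion_update_eq (X : Finset T) :
    univ.biUnion (update F i X) = (univ.erase i).biUnion F ∪ X := by
  conv_lhs => rw [← insert_erase (mem_univ i)]
  rw [biUnion_insert, update_self, union_comm]
  congr 1
  exact biUnion_congr rfl fun k hk => update_of_ne (ne_of_mem_erase hk) _ _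

theorem biUnion_eq_union_biUnion_erase : univ.biUnion F = F i ∪ (univ.erase i).biUnion F := by
  rw [← biUnion_insert, insert_erase (mem_univ i)]

theorem biUnion_update_union_self (X : Finset T) :
    univ.biUnion (update F i (F i ∪ X)) = univ.biUnion F ∪ X := by
  rw [biUnion_update_eq, biUnion_eq_union_biUnion_erase F i, union_left_comm, union_assoc]

theorem biUnion_update_empty {F : ι → Finset T} (hF : Pairwise (Disjoint on F)) (i : ι) :
    univ.biUnion (update F i ∅) = univ.biUnion F \ F i := by
  rw [biUnion_update_eq, union_empty, biUnion_eq_union_biUnion_erase F i,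
    union_sdiff_cancel_left]
  exact (disjoint_biUnion_right _ _ _).2 fun k hk => hF (ne_of_mem_erase hk).symm

end Update

section Game

variable {ι T : Type*} [Fintype ι] [DecidableEq ι] [DecidableEq T]
  {f : Finset T → ℝ} {c : T → ℝ} {i : ι}

theorem mul_sub_le_sum_of_nash {own : T → ι} (hc : ∀ j, 0 ≤ c j) {Sd : ι → Finset T}
    {β : ℝ} (hNE : ∀ S' : Finset T, (∀ j ∈ S', own j = i) →
      β * f (univ.biUnion Sd) - ∑ j ∈ Sd i, c j ≥
        β * f (univ.biUnion (update Sd i S')) - ∑ j ∈ S', c j)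
    (hSd : ∀ j ∈ Sd i, own j = i) {X : Finset T} (hX : ∀ j ∈ X, own j = i) :
    β * (f (univ.biUnion Sd ∪ X) - f (univ.biUnion Sd)) ≤ ∑ j ∈ X, c j := by
  have hdev := hNE (Sd i ∪ X) fun j hj => (mem_union.1 hj).elim (hSd j) (hX j)
  rw [biUnion_update_union_self] at hdev
  have hcost : ∑ j ∈ Sd i ∪ X, c j ≤ ∑ j ∈ Sd i, c j + ∑ j ∈ X, c j := by
    rw [← sum_union_inter]
    linarith [sum_nonneg fun j (_ : j ∈ Sd i ∩ X) => hc j]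
  linarith

theorem sum_le_mul_sub_of_stable {S : ι → Finset T} (hS : Pairwise (Disjoint on S)) {a : ℝ}
    (hstable : ∀ S' ⊆ S i, a * f (univ.biUnion S) - ∑ j ∈ S i, c j ≥
      a * f (univ.biUnion (update S i S')) - ∑ j ∈ S', c j) :
    ∑ j ∈ S i, c j ≤ a * (f (univ.biUnion S) - f (univ.biUnion S \ S i)) := by
  have hdev := hstable ∅ (empty_subset _)
  rw [biUnion_update_empty hS, sum_empty] at hdev
  linarith

end Game

theorem stmt_13_general {n : ℕ} {T : Type*} [DecidableEq T]
    (own : T → Fin n) (f : Finset T → ℝ) (c : T → ℝ)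
    (hmono : ∀ A B : Finset T, A ⊆ B → f A ≤ f B)
    (hsubmod : ∀ A B : Finset T, f (A ∪ B) + f (A ∩ B) ≤ f A + f B)
    (hempty : f ∅ = 0)
    (hc : ∀ j, 0 ≤ c j)
    (α : Fin n → ℝ) (hα : ∀ i, 0 ≤ α i ∧ α i ≤ 1)
    (S : Fin n → Finset T) (hSown : ∀ i, ∀ j ∈ S i, own j = i)
    (hstable : ∀ i : Fin n, ∀ S' ⊆ S i,
      α i * f (Finset.univ.biUnion S) - ∑ j ∈ S i, c j ≥
        α i * f (Finset.univ.biUnion (Function.update S i S')) - ∑ j ∈ S', c j)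
    (hzero : ∀ i, α i = 0 → S i = ∅)
    (Sd : Fin n → Finset T) (hSdown : ∀ i, ∀ j ∈ Sd i, own j = i)
    (hNE : ∀ i : Fin n, ∀ S' : Finset T, (∀ j ∈ S', own j = i) →
      (2 * α i) * f (Finset.univ.biUnion Sd) - ∑ j ∈ Sd i, c j ≥
        (2 * α i) * f (Finset.univ.biUnion (Function.update Sd i S')) - ∑ j ∈ S', c j) :
    f (Finset.univ.biUnion Sd) ≥ (1 / 2) * f (Finset.univ.biUnion S) := by
  have hS := pairwise_disjoint_of_owner hSown
  suffices f (univ.biUnion S) ≤ 2 * f (univ.biUnion Sd) by linarith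
  refine le_two_mul_of_two_mul_sub_le_sub hmono hsubmod hempty univ (hS.set_pairwise _) _
    fun i _ => ?_
  rcases (hα i).1.eq_or_lt with hα0 | hαpos
  · simp [hzero i hα0.symm]
  · have hgain := mul_sub_le_sum_of_nash hc (hNE i) (hSdown i) (hSown i)
    have hloss := sum_le_mul_sub_of_stable hS (hstable i)
    exact le_of_mul_le_mul_left (by linarith) hαpos

/-- modified doubling lemma: Let `f` be monotone submodular with
`f ∅ = 0` on the disjoint union of per-agent action sets (modelled by an
ownership map `own : T → Fin n`). If `S` is subset-stable with respect to
contract `α`, with `S i = ∅` whenever `α i = 0`, then every Nash equilibrium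
`Sd` of the contract `2α` satisfies `f(⊔ Sd) ≥ (1/2) f(⊔ S)`. -/
theorem stmt_13 {n : ℕ} {T : Type*} [Fintype T] [DecidableEq T]
    (own : T → Fin n) (f : Finset T → ℝ) (c : T → ℝ)
    (hmono : ∀ A B : Finset T, A ⊆ B → f A ≤ f B)
    (hsubmod : ∀ A B : Finset T, f (A ∪ B) + f (A ∩ B) ≤ f A + f B)
    (hempty : f ∅ = 0)
    (hrange : ∀ A : Finset T, 0 ≤ f A ∧ f A ≤ 1)
    (hc : ∀ j, 0 ≤ c j)
    (α : Fin n → ℝ) (hα : ∀ i, 0 ≤ α i ∧ α i ≤ 1)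
    (S : Fin n → Finset T) (hSown : ∀ i, ∀ j ∈ S i, own j = i)
    (hstable : ∀ i : Fin n, ∀ S' ⊆ S i,
      α i * f (Finset.univ.biUnion S) - ∑ j ∈ S i, c j ≥
        α i * f (Finset.univ.biUnion (Function.update S i S')) - ∑ j ∈ S', c j)
    (hzero : ∀ i, α i = 0 → S i = ∅)
    (Sd : Fin n → Finset T) (hSdown : ∀ i, ∀ j ∈ Sd i, own j = i)
    (hNE : ∀ i : Fin n, ∀ S' : Finset T, (∀ j ∈ S', own j = i) →
      (2 * α i) * f (Finset.univ.biUnion Sd) - ∑ j ∈ Sd i, c j ≥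
        (2 * α i) * f (Finset.univ.biUnion (Function.update Sd i S')) - ∑ j ∈ S', c j) :
    f (Finset.univ.biUnion Sd) ≥ (1 / 2) * f (Finset.univ.biUnion S) :=
  stmt_13_general own f c hmono hsubmod hempty hc α hα S hSown hstable hzero Sd hSdown hNE
end

section
/- Let f be monotone submodular on T = T₁ ⊔ … ⊔ T_n with f(∅)=0, and let S be subset-stable with respect to contract α. Then for any subset of agents G ⊆ [n], the restricted profile S|_G (keeping Sᵢ for i ∈ G and replacing Sᵢ by ∅ otherwise) is subset-stable with respect to the contract α|_G (keeping αᵢ for i ∈ G and zero otherwise). -/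
/-!
Write `U ⊇ U'` for the items held by the agents of `G` before and after agent `i ∈ G` shrinks
`Sᵢ` to `S'`, and `R` for the items of the agents outside `G`. Under `S|_G` the deviation costs
`i` the value `f U - f U'`, under `S` it costs `f (U ∪ R) - f (U' ∪ R)`; by diminishing returns
of a monotone submodular `f` the former is the larger, so the stability inequality of `S`
implies that of `S|_G`. Agents outside `G` hold nothing and have nothing to deviate to.
-/

open Finset Function

section SubsetStability

variable {T : Type*} [DecidableEq T] {f : Finset T → ℝ}

lemma sub_union_le_sub_of_submodular (hmono : Monotone f)
    (hsubmod : ∀ A B : Finset T, f (A ∪ B) + f (A ∩ B) ≤ f A + f B)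
    {A B : Finset T} (hBA : B ⊆ A) (X : Finset T) :
    f (A ∪ X) - f (B ∪ X) ≤ f A - f B := by
  have h := hsubmod A (B ∪ X)
  rw [← union_assoc, union_eq_left.2 hBA] at h
  have : f B ≤ f (A ∩ (B ∪ X)) := hmono (subset_inter hBA subset_union_left)
  linarith

variable {ι : Type*} [DecidableEq ι]

lemma biUnion_update_subset (s : Finset ι) {S : ι → Finset T} {i : ι} {S' : Finset T}
    (hS' : S' ⊆ S i) : s.biUnion (update S i S') ⊆ s.biUnion S :=
  biUnion_mono fun _ _ => update_le_self_iff.2 hS' _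

variable [Fintype ι]

def SubsetStable (f : Finset T → ℝ) (c : T → ℝ) (α : ι → ℝ) (S : ι → Finset T) : Prop :=
  ∀ i, ∀ S' ⊆ S i, α i * f (univ.biUnion S) - ∑ j ∈ S i, c j ≥
    α i * f (univ.biUnion (update S i S')) - ∑ j ∈ S', c j

lemma biUnion_piecewise_empty (G : Finset ι) (S : ι → Finset T) :
    univ.biUnion (G.piecewise S fun _ => ∅) = G.biUnion S := by
  ext j
  simp [Finset.piecewise, apply_ite (j ∈ ·)]

lemma biUnion_eq_union_compl (G : Finset ι) (S : ι → Finset T) :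
    univ.biUnion S = G.biUnion S ∪ Gᶜ.biUnion S := by
  rw [← union_biUnion, union_compl]

theorem SubsetStable.piecewise {c : T → ℝ} {α : ι → ℝ} {S : ι → Finset T}
    (hmono : Monotone f) (hsubmod : ∀ A B : Finset T, f (A ∪ B) + f (A ∩ B) ≤ f A + f B)
    (hα : ∀ i, 0 ≤ α i) (hS : SubsetStable f c α S) (G : Finset ι) :
    SubsetStable f c (G.piecewise α 0) (G.piecewise S fun _ => ∅) := by
  intro i S' hS'
  by_cases hi : i ∈ G
  · simp only [piecewise_eq_of_mem _ _ _ hi] at hS' ⊢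
    rw [update_piecewise_of_mem _ _ _ hi, biUnion_piecewise_empty, biUnion_piecewise_empty]
    have hstable := hS i S' hS'
    have hrest : Gᶜ.biUnion (update S i S') = Gᶜ.biUnion S :=
      biUnion_congr rfl fun j hj => update_of_ne (by rintro rfl; exact mem_compl.1 hj hi) ..
    rw [biUnion_eq_union_compl G S, biUnion_eq_union_compl G (update S i S'), hrest]
      at hstable
    have hgain := sub_union_le_sub_of_submodular hmono hsubmod
      (biUnion_update_subset G hS') (Gᶜ.biUnion S)
    linarith [mul_le_mul_of_nonneg_left hgain (hα i)]
  · obtain rfl : S' = ∅ := by simpa [hi] using hS'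
    simp [hi]

end SubsetStability

theorem stmt_14_general {n : ℕ} {T : Type*} [Fintype T] [DecidableEq T]
    (f : Finset T → ℝ) (c : T → ℝ)
    (hmono : ∀ A B : Finset T, A ⊆ B → f A ≤ f B)
    (hsubmod : ∀ A B : Finset T, f (A ∪ B) + f (A ∩ B) ≤ f A + f B)
    (α : Fin n → ℝ) (hα : ∀ i, 0 ≤ α i ∧ α i ≤ 1)
    (S : Fin n → Finset T)
    (hstable : ∀ i : Fin n, ∀ S' ⊆ S i,
      α i * f (Finset.univ.biUnion S) - ∑ j ∈ S i, c j ≥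
        α i * f (Finset.univ.biUnion (Function.update S i S')) - ∑ j ∈ S', c j)
    (G : Finset (Fin n)) :
    ∀ i : Fin n, ∀ S' ⊆ (if i ∈ G then S i else ∅),
      (if i ∈ G then α i else 0) *
          f (Finset.univ.biUnion (fun i' => if i' ∈ G then S i' else ∅)) -
          ∑ j ∈ (if i ∈ G then S i else ∅), c j ≥
        (if i ∈ G then α i else 0) *
          f (Finset.univ.biUnion
              (Function.update (fun i' => if i' ∈ G then S i' else ∅) i S')) -
          ∑ j ∈ S', c j :=
  SubsetStable.piecewise (fun A B h => hmono A B h) hsubmod (fun i => (hα i).1) hstable G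

/-- For monotone submodular `f` with `f ∅ = 0`, if `S` is
subset-stable with respect to contract `α`, then for any subset of agents `G`,
the restricted profile `S|_G` is subset-stable with respect to `α|_G`. -/
theorem stmt_14 {n : ℕ} {T : Type*} [Fintype T] [DecidableEq T]
    (own : T → Fin n) (f : Finset T → ℝ) (c : T → ℝ)
    (hmono : ∀ A B : Finset T, A ⊆ B → f A ≤ f B)
    (hsubmod : ∀ A B : Finset T, f (A ∪ B) + f (A ∩ B) ≤ f A + f B)
    (hempty : f ∅ = 0)
    (hc : ∀ j, 0 ≤ c j)
    (α : Fin n → ℝ) (hα : ∀ i, 0 ≤ α i ∧ α i ≤ 1)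
    (S : Fin n → Finset T) (hSown : ∀ i, ∀ j ∈ S i, own j = i)
    (hstable : ∀ i : Fin n, ∀ S' ⊆ S i,
      α i * f (Finset.univ.biUnion S) - ∑ j ∈ S i, c j ≥
        α i * f (Finset.univ.biUnion (Function.update S i S')) - ∑ j ∈ S', c j)
    (G : Finset (Fin n)) :
    ∀ i : Fin n, ∀ S' ⊆ (if i ∈ G then S i else ∅),
      (if i ∈ G then α i else 0) *
          f (Finset.univ.biUnion (fun i' => if i' ∈ G then S i' else ∅)) -
          ∑ j ∈ (if i ∈ G then S i else ∅), c j ≥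
        (if i ∈ G then α i else 0) *
          f (Finset.univ.biUnion
              (Function.update (fun i' => if i' ∈ G then S i' else ∅) i S')) -
          ∑ j ∈ S', c j :=
  stmt_14_general f c hmono hsubmod α hα S hstable G
end

section
/- Let f be additive on T with f(j) > 0 for all j, let c : T → ℝ≥0, and fix a payment p ≥ 0. For each agent i define wᵢ = Σ_{j ∈ Tᵢ : c(j)/f(j) ≤ p} f(j), and assume w₁ ≥ w₂ ≥ … ≥ w_n ≥ 0. Then max over subsets S ⊆ [n] of (1 - p·|S|)·Σ_{i∈S} wᵢ is attained by a prefix S = {1,…,k} for some 0 ≤ k ≤ n. -/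
/-!
The `j`-th smallest element of `S` has index at least `j`, so for antitone weights the prefix
of length `|S|` carries at least the weight of `S`. Hence when `1 - p|S| ≥ 0` the prefix of
length `|S|` does at least as well as `S`, and when `1 - p|S| < 0` the objective of `S` is
nonpositive, i.e. at most that of the empty prefix. A best prefix therefore beats every set.
-/

open Finset

theorem Fin.val_le_of_strictMono {m n : ℕ} {f : Fin m → Fin n} (hf : StrictMono f) (i : Fin m) :
    (i : ℕ) ≤ f i := by
  simpa using card_le_card_of_injOn f (s := Iio i) (t := Iio (f i))
    (fun j hj => by simpa using hf (by simpa using hj)) hf.injective.injOn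

theorem Fin.filter_val_lt_eq_map_castLE {n k : ℕ} (hk : k ≤ n) :
    univ.filter (fun i : Fin n => (i : ℕ) < k) = univ.map (Fin.castLEEmb hk) := by
  ext i
  simp only [mem_filter, mem_univ, true_and, mem_map]
  exact ⟨fun hi => ⟨⟨i, hi⟩, rfl⟩, by rintro ⟨j, rfl⟩; exact j.isLt⟩

theorem Finset.sum_le_sum_filter_val_lt_card {M : Type*} [AddCommMonoid M] [PartialOrder M]
    [IsOrderedAddMonoid M] {n : ℕ} {w : Fin n → M} (hw : Antitone w) (S : Finset (Fin n)) :
    ∑ i ∈ S, w i ≤ ∑ i ∈ univ.filter (fun i : Fin n => (i : ℕ) < #S), w i := by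
  have hS : #S ≤ n := by simpa using S.card_le_univ
  let e := S.orderEmbOfFin rfl
  calc ∑ i ∈ S, w i = ∑ j, w (e j) := by
        conv_lhs => rw [← map_orderEmbOfFin_univ S rfl, sum_map]
        rfl
    _ ≤ ∑ j, w (Fin.castLE hS j) :=
        sum_le_sum fun j _ => hw (Fin.le_def.mpr (Fin.val_le_of_strictMono e.strictMono j))
    _ = _ := by rw [Fin.filter_val_lt_eq_map_castLE hS, sum_map]; rfl

theorem stmt_17_general (n : ℕ) (w : Fin n → ℝ) (hw : ∀ i, 0 ≤ w i)
    (hmono : ∀ i j : Fin n, i ≤ j → w j ≤ w i)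
    (p : ℝ) :
    ∃ k ≤ n, ∀ S : Finset (Fin n),
      (1 - p * (S.card : ℝ)) * ∑ i ∈ S, w i ≤
        (1 - p * (k : ℝ)) *
          ∑ i ∈ Finset.univ.filter (fun i : Fin n => (i : ℕ) < k), w i := by
  let g : ℕ → ℝ := fun k =>
    (1 - p * (k : ℝ)) * ∑ i ∈ univ.filter (fun i : Fin n => (i : ℕ) < k), w i
  obtain ⟨k, hk, hg⟩ := (range (n + 1)).exists_max_image g ⟨0, by simp⟩
  refine ⟨k, Nat.lt_succ_iff.mp (mem_range.mp hk), fun S => ?_⟩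
  rcases lt_or_ge (1 - p * #S) 0 with hneg | hnonneg
  · calc (1 - p * #S) * ∑ i ∈ S, w i ≤ 0 :=
          mul_nonpos_of_nonpos_of_nonneg hneg.le (sum_nonneg fun i _ => hw i)
      _ = g 0 := by simp [g]
      _ ≤ g k := hg 0 (by simp)
  · calc (1 - p * #S) * ∑ i ∈ S, w i ≤ g #S :=
          mul_le_mul_of_nonneg_left (sum_le_sum_filter_val_lt_card hmono S) hnonneg
      _ ≤ g k := hg #S (mem_range.mpr (Nat.lt_succ_of_le (by simpa using S.card_le_univ)))

/-- For nonincreasing nonnegative weights `w₁ ≥ … ≥ w_n ≥ 0` and a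
payment `p ≥ 0`, the objective `(1 - p·|S|)·∑_{i∈S} wᵢ` over subsets `S ⊆ [n]`
is maximized by a prefix `{1,…,k}`. -/
theorem stmt_17 (n : ℕ) (w : Fin n → ℝ) (hw : ∀ i, 0 ≤ w i)
    (hmono : ∀ i j : Fin n, i ≤ j → w j ≤ w i)
    (p : ℝ) (hp : 0 ≤ p) :
    ∃ k ≤ n, ∀ S : Finset (Fin n),
      (1 - p * (S.card : ℝ)) * ∑ i ∈ S, w i ≤
        (1 - p * (k : ℝ)) *
          ∑ i ∈ Finset.univ.filter (fun i : Fin n => (i : ℕ) < k), w i :=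
  stmt_17_general n w hw hmono p
end
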